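/- Let P be a (ε_k, 2)-uniform noisy sample of a compact set K. Let Q be the output of Declutter(P,k) and let P' = P ∩ ⋃_{q∈Q} B(q, C d_{P,k}(q)) with resampling constant C = 10 + 2√2. Then the Hausdorff distance satisfies δ_H(P', K) ≤ 8Cε_k + 7ε_k. -/

import Mathlib

/-!
The k-distance is 1-Lipschitz: each order statistic of the distances to `P` is, and by
Minkowski's inequality so is the root mean square of the first `k` of them. Moreover every
point `x` lies within `kdist x` of `P`. Hence every `x ∈ K` has a sample point `p` with
`d(x, p) ≤ ε` and `kdist p ≤ 2ε`, and Declutter keeps some `q` with `d(p, q) ≤ 2 kdist p` and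
`kdist q ≤ kdist p`: every point of `K` is within `5ε` of a kept point of k-distance `≤ 2ε`.
A kept point `q` of larger k-distance was kept after all of these, so it is `2 kdist q`-far from
them, which gives `2 kdist q - 5ε ≤ d(q, K) ≤ kdist q + ε`, i.e. `kdist q ≤ 6ε`. So resampled
points lie within `(6C + 7)ε` of `K`, and every point of `K` is within `5ε` of a kept point,
which is itself resampled.
-/

open Metric

/-- Core loop of the Declutter algorithm: scan the (pre-sorted) list, keeping a point `p`
iff no previously kept point lies in the open ball `B(p, 2 f p)` (w.r.t. distance `d`). -/
noncomputable def declutterAux {X : Type*} (d : X → X → ℝ) (f : X → ℝ) :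
    List X → List X → List X
  | Q, [] => Q
  | Q, p :: rest =>
    if ∀ q ∈ Q, 2 * f p ≤ d p q then declutterAux d f (Q ++ [p]) rest
    else declutterAux d f Q rest

noncomputable def declutter {X : Type*} (d : X → X → ℝ) (f : X → ℝ) (L : List X) : List X :=
  declutterAux d f [] L

/-- `Q` is a possible output of the Declutter algorithm on `P`, with robust distance
function `f`: the points of `P` are processed in nondecreasing order of `f`
(ties broken arbitrarily). -/
def IsDeclutterOutput {X : Type*} (d : X → X → ℝ) (f : X → ℝ) (P : Finset X)
    (Q : List X) : Prop :=
  ∃ L : List X, L.Perm P.toList ∧ L.Pairwise (fun a b => f a ≤ f b) ∧ Q = declutter d f L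

variable {X : Type*} [MetricSpace X]

/-- Sorted (nondecreasing) list of distances from `x` to the points of `P`. -/
noncomputable def sortedDists (P : Finset X) (x : X) : List ℝ :=
  (P.val.map (dist x)).sort (· ≤ ·)

/-- The k-distance: root mean square of the distances to the k nearest neighbors in `P`. -/
noncomputable def kdist (P : Finset X) (k : ℕ) (x : X) : ℝ :=
  Real.sqrt ((1 / (k : ℝ)) * (((sortedDists P x).take k).map (fun r => r ^ 2)).sum)

/-- `P` is an ε_k-noisy sample of `K`:
(1) the k-distance is at most ε on `K`; (2) every point of the space is within
`kdist + ε` of `K`. -/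
def NoisySample (P : Finset X) (k : ℕ) (K : Set X) (ε : ℝ) : Prop :=
  (∀ x ∈ K, kdist P k x ≤ ε) ∧ ∀ x : X, infDist x K ≤ kdist P k x + ε

theorem List.SortedLE.getElem_le_iff_lt_countP {α : Type*} [LinearOrder α] {l : List α}
    (hl : l.SortedLE) {i : ℕ} (hi : i < l.length) (v : α) :
    l[i] ≤ v ↔ i < l.countP (· ≤ v) := by
  constructor
  · intro hiv
    have hprefix : ∀ a ∈ l.take (i + 1), a ≤ v := by
      intro a ha
      obtain ⟨j, hj, rfl⟩ := List.mem_take_iff_getElem.mp ha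
      exact (hl.getElem_le_getElem_of_le (by omega)).trans hiv
    calc i < (l.take (i + 1)).length := by rw [List.length_take]; omega
      _ = (l.take (i + 1)).countP (· ≤ v) :=
          (List.countP_eq_length.mpr (by simpa using hprefix)).symm
      _ ≤ l.countP (· ≤ v) := (List.take_sublist _ _).countP_le
  · contrapose!
    intro hvi
    have hsuffix : (l.drop i).countP (· ≤ v) = 0 := by
      refine List.countP_eq_zero.mpr fun a ha => ?_
      obtain ⟨j, hj, rfl⟩ := List.mem_drop_iff_getElem.mp ha
      simpa using hvi.trans_le (hl.getElem_le_getElem_of_le (by omega))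
    calc l.countP (· ≤ v) = (l.take i).countP (· ≤ v) := by
          rw [← List.take_append_drop i l, List.countP_append, hsuffix, add_zero,
            List.take_append_drop]
      _ ≤ (l.take i).length := List.countP_le_length
      _ ≤ i := List.length_take_le _ _

theorem Multiset.countP_map_le_countP_map_of_le_add {α : Type*} (s : Multiset α) {f g : α → ℝ}
    {c : ℝ} (h : ∀ a ∈ s, f a ≤ g a + c) (w : ℝ) :
    (s.map g).countP (· ≤ w) ≤ (s.map f).countP (· ≤ w + c) := by
  obtain ⟨l, rfl⟩ := Quot.exists_rep s
  simp only [Multiset.quot_mk_to_coe'', Multiset.map_coe, Multiset.coe_countP, List.countP_map]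
  refine List.countP_mono_left fun a ha hle => ?_
  simp only [Function.comp_apply, decide_eq_true_eq] at hle ⊢
  linarith [h a ha]

theorem Multiset.getD_sort_map_le_add {α : Type*} (s : Multiset α) {f g : α → ℝ} {c : ℝ}
    (hc : 0 ≤ c) (h : ∀ a ∈ s, f a ≤ g a + c) (i : ℕ) :
    ((s.map f).sort (· ≤ ·)).getD i 0 ≤ ((s.map g).sort (· ≤ ·)).getD i 0 + c := by
  have hsorted : ∀ t : Multiset ℝ, (t.sort (· ≤ ·)).SortedLE := fun t =>
    (Multiset.pairwise_sort t _).sortedLE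
  have hcount : ∀ (t : Multiset ℝ) (w : ℝ), (t.sort (· ≤ ·)).countP (· ≤ w) = t.countP (· ≤ w) :=
    fun t w => by rw [← Multiset.coe_countP, Multiset.sort_eq]
  by_cases hi : i < Multiset.card s
  · have hif : i < ((s.map f).sort (· ≤ ·)).length := by simpa using hi
    have hig : i < ((s.map g).sort (· ≤ ·)).length := by simpa using hi
    rw [List.getD_eq_getElem _ _ hif, List.getD_eq_getElem _ _ hig,
      (hsorted _).getElem_le_iff_lt_countP, hcount]
    refine lt_of_lt_of_le ?_ (s.countP_map_le_countP_map_of_le_add h _)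
    rw [← hcount, ← (hsorted _).getElem_le_iff_lt_countP hig]
  · push Not at hi
    rw [List.getD_eq_default _ _ (by simpa using hi), List.getD_eq_default _ _ (by simpa using hi)]
    linarith

theorem List.sum_map_take_eq_sum_getD {α M : Type*} [AddCommMonoid M] (l : List α) (k : ℕ)
    (d : α) {φ : α → M} (hφ : φ d = 0) :
    ((l.take k).map φ).sum = ∑ i : Fin k, φ (l.getD i d) := by
  induction l generalizing k with
  | nil => simp [hφ]
  | cons a l ih =>
    cases k with
    | zero => simp
    | succ k =>
      simp only [List.take_succ_cons, List.map_cons, List.sum_cons, ih, Fin.sum_univ_succ]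
      simp

theorem Real.sqrt_mean_sq_le_add {n : ℕ} {f g : Fin n → ℝ} {c : ℝ} (hf : ∀ i, 0 ≤ f i)
    (hfg : ∀ i, f i ≤ g i + c) (hc : 0 ≤ c) :
    √(1 / n * ∑ i, f i ^ 2) ≤ √(1 / n * ∑ i, g i ^ 2) + c := by
  let u : EuclideanSpace ℝ (Fin n) := WithLp.toLp 2 g
  let w : EuclideanSpace ℝ (Fin n) := WithLp.toLp 2 fun _ => c
  have hminkowski : √(∑ i, f i ^ 2) ≤ √(∑ i, g i ^ 2) + √n * c :=
    calc √(∑ i, f i ^ 2) ≤ √(∑ i, (g i + c) ^ 2) :=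
          Real.sqrt_le_sqrt (Finset.sum_le_sum fun i _ => pow_le_pow_left₀ (hf i) (hfg i) 2)
      _ = ‖u + w‖ := by simp [u, w, EuclideanSpace.norm_eq]
      _ ≤ ‖u‖ + ‖w‖ := norm_add_le u w
      _ = √(∑ i, g i ^ 2) + √n * c := by
          simp [u, w, EuclideanSpace.norm_eq, Real.sqrt_sq hc]
  have hscale : √(1 / n) * √n ≤ 1 := by
    rw [← Real.sqrt_mul (by positivity)]
    exact Real.sqrt_le_one.mpr (by
      rcases n.eq_zero_or_pos with rfl | hn
      · simp
      · simp [hn.ne'])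
  rw [Real.sqrt_mul (by positivity), Real.sqrt_mul (by positivity)]
  calc √(1 / n) * √(∑ i, f i ^ 2) ≤ √(1 / n) * (√(∑ i, g i ^ 2) + √n * c) := by gcongr
    _ ≤ √(1 / n) * √(∑ i, g i ^ 2) + c := by nlinarith [Real.sqrt_nonneg (1 / n)]

theorem sortedDists_sortedLE (P : Finset X) (x : X) : (sortedDists P x).SortedLE :=
  (Multiset.pairwise_sort _ _).sortedLE

@[simp]
theorem length_sortedDists (P : Finset X) (x : X) : (sortedDists P x).length = P.card := by
  simp [sortedDists]

theorem mem_sortedDists {P : Finset X} {x : X} {r : ℝ} :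
    r ∈ sortedDists P x ↔ ∃ p ∈ P, dist x p = r := by
  simp [sortedDists]

theorem getD_sortedDists_nonneg (P : Finset X) (x : X) (i : ℕ) :
    0 ≤ (sortedDists P x).getD i 0 := by
  by_cases hi : i < (sortedDists P x).length
  · obtain ⟨p, -, hp⟩ := mem_sortedDists.mp (List.getElem_mem hi)
    rw [List.getD_eq_getElem _ _ hi, ← hp]
    exact dist_nonneg
  · rw [List.getD_eq_default _ _ (not_lt.mp hi)]

theorem getD_sortedDists_le_add (P : Finset X) (x y : X) (i : ℕ) :
    (sortedDists P x).getD i 0 ≤ (sortedDists P y).getD i 0 + dist x y :=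
  P.val.getD_sort_map_le_add dist_nonneg
    (fun p _ => (dist_triangle x y p).trans_eq (add_comm _ _)) i

theorem kdist_nonneg (P : Finset X) (k : ℕ) (x : X) : 0 ≤ kdist P k x :=
  Real.sqrt_nonneg _

theorem kdist_eq_sqrt_sum (P : Finset X) (k : ℕ) (x : X) :
    kdist P k x = √(1 / k * ∑ i : Fin k, (sortedDists P x).getD i 0 ^ 2) := by
  rw [kdist, List.sum_map_take_eq_sum_getD _ _ 0 (zero_pow two_ne_zero)]

theorem lipschitzWith_kdist (P : Finset X) (k : ℕ) : LipschitzWith 1 (kdist P k) :=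
  LipschitzWith.of_le_add fun x y => by
    simp only [kdist_eq_sqrt_sum]
    exact Real.sqrt_mean_sq_le_add (fun i => getD_sortedDists_nonneg P x i)
      (fun i => getD_sortedDists_le_add P x y i) dist_nonneg

theorem exists_dist_le_kdist {P : Finset X} {k : ℕ} (hk : 1 ≤ k) (hkP : k ≤ P.card) (x : X) :
    ∃ p ∈ P, dist x p ≤ kdist P k x := by
  have h0 : 0 < (sortedDists P x).length := by rw [length_sortedDists]; omega
  obtain ⟨p, hp, hpr⟩ := mem_sortedDists.mp (List.getElem_mem h0)
  refine ⟨p, hp, ?_⟩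
  calc dist x p = √(1 / k * ∑ _i : Fin k, dist x p ^ 2) := by
        rw [Finset.sum_const, Finset.card_univ, Fintype.card_fin, nsmul_eq_mul, one_div,
          inv_mul_cancel_left₀ (by positivity), Real.sqrt_sq dist_nonneg]
    _ ≤ kdist P k x := by
        rw [kdist_eq_sqrt_sum]
        gcongr with i
        have hi : (i : ℕ) < (sortedDists P x).length := by rw [length_sortedDists]; omega
        rw [hpr, List.getD_eq_getElem _ _ hi]
        exact (sortedDists_sortedLE P x).getElem_le_getElem_of_le (Nat.zero_le _)

section Declutter

variable {Y : Type*} {d : Y → Y → ℝ} {f : Y → ℝ}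

theorem prefix_declutterAux (Q L : List Y) : Q <+: declutterAux d f Q L := by
  induction L generalizing Q with
  | nil => simp [declutterAux]
  | cons p L ih =>
    rw [declutterAux]
    split_ifs
    · exact (List.prefix_append Q [p]).trans (ih _)
    · exact ih Q

theorem declutterAux_sublist (Q L : List Y) : (declutterAux d f Q L).Sublist (Q ++ L) := by
  induction L generalizing Q with
  | nil => simp [declutterAux]
  | cons p L ih =>
    rw [declutterAux]
    split_ifs
    · simpa using ih (Q ++ [p])
    · exact (ih Q).trans ((List.sublist_cons_self p L).append_left Q)

theorem pairwise_declutterAux {Q : List Y} (hQ : Q.Pairwise fun a b => 2 * f b ≤ d b a)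
    (L : List Y) : (declutterAux d f Q L).Pairwise fun a b => 2 * f b ≤ d b a := by
  induction L generalizing Q with
  | nil => simpa [declutterAux]
  | cons p L ih =>
    rw [declutterAux]
    split_ifs with hp
    · exact ih (List.pairwise_append.mpr ⟨hQ, List.pairwise_singleton _ _, by simpa⟩)
    · exact ih hQ

theorem exists_mem_declutterAux {Q L : List Y} (hsorted : (Q ++ L).Pairwise fun a b => f a ≤ f b)
    {p : Y} (hp : p ∈ L) : ∃ q ∈ declutterAux d f Q L, (q = p ∨ d p q < 2 * f p) ∧ f q ≤ f p := by
  induction L generalizing Q with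
  | nil => simp at hp
  | cons a L ih =>
    rw [declutterAux]
    split_ifs with ha
    · rcases List.mem_cons.mp hp with rfl | hp
      · exact ⟨p, (prefix_declutterAux _ L).subset (by simp), Or.inl rfl, le_rfl⟩
      · exact ih (by simpa using hsorted) hp
    · rcases List.mem_cons.mp hp with rfl | hp
      · push Not at ha
        obtain ⟨q, hq, hqp⟩ := ha
        refine ⟨q, (prefix_declutterAux Q L).subset hq, Or.inr hqp, ?_⟩
        exact (List.pairwise_append.mp hsorted).2.2 q hq p List.mem_cons_self
      · exact ih (hsorted.sublist ((List.sublist_cons_self a L).append_left Q)) hp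

end Declutter

namespace IsDeclutterOutput

variable {Y : Type*} {d : Y → Y → ℝ} {f : Y → ℝ} {P : Finset Y} {Q : List Y}

theorem mem_of_mem (hQ : IsDeclutterOutput d f P Q) {q : Y} (hq : q ∈ Q) : q ∈ P := by
  obtain ⟨L, hperm, -, rfl⟩ := hQ
  simpa [hperm.mem_iff] using (declutterAux_sublist [] L).subset hq

theorem exists_mem_near (hQ : IsDeclutterOutput d f P Q) {p : Y} (hp : p ∈ P) :
    ∃ q ∈ Q, (q = p ∨ d p q < 2 * f p) ∧ f q ≤ f p := by
  obtain ⟨L, hperm, hsorted, rfl⟩ := hQ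
  exact exists_mem_declutterAux hsorted (by simpa [hperm.mem_iff] using hp)

theorem two_mul_le_of_lt (hQ : IsDeclutterOutput d f P Q) {q q' : Y} (hq : q ∈ Q)
    (hq' : q' ∈ Q) (hlt : f q' < f q) : 2 * f q ≤ d q q' := by
  obtain ⟨L, -, hsorted, rfl⟩ := hQ
  -- a symmetric weakening of the pairwise facts, so that `List.Pairwise.forall` applies
  let S : Y → Y → Prop := fun a b => (f b < f a → 2 * f a ≤ d a b) ∧ (f a < f b → 2 * f b ≤ d b a)
  have hS : (declutterAux d f [] L).Pairwise S :=
    ((hsorted.sublist (declutterAux_sublist [] L)).and (pairwise_declutterAux .nil L)).imp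
      fun ⟨hle, hsep⟩ => ⟨fun hlt => absurd hle (not_le.mpr hlt), fun _ => hsep⟩
  have : Std.Symm S := ⟨fun _ _ h => h.symm⟩
  exact (hS.forall hq hq' (by rintro rfl; exact lt_irrefl _ hlt)).1 hlt

end IsDeclutterOutput

namespace NoisySample

variable {P : Finset X} {k : ℕ} {K : Set X} {ε : ℝ}

theorem nonneg (hsample : NoisySample P k K ε) (hKne : K.Nonempty) : 0 ≤ ε := by
  obtain ⟨x, hx⟩ := hKne
  exact (kdist_nonneg P k x).trans (hsample.1 x hx)

theorem exists_mem_declutter_near (hsample : NoisySample P k K ε) (hk : 1 ≤ k)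
    (hkP : k ≤ P.card) {Q : List X} (hQ : IsDeclutterOutput (fun a b => dist a b) (kdist P k) P Q)
    {x : X} (hx : x ∈ K) : ∃ q ∈ Q, kdist P k q ≤ 2 * ε ∧ dist x q ≤ 5 * ε := by
  obtain ⟨p, hp, hxp⟩ := exists_dist_le_kdist hk hkP x
  have hxε := hsample.1 x hx
  have hlip := (lipschitzWith_kdist P k).le_add_mul p x
  rw [NNReal.coe_one, one_mul, dist_comm] at hlip
  have hpε : kdist P k p ≤ 2 * ε := by linarith
  obtain ⟨q, hq, hpq, hqp⟩ := hQ.exists_mem_near hp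
  have hpq' : dist p q ≤ 2 * kdist P k p := by
    rcases hpq with rfl | hpq
    · simp [kdist_nonneg]
    · exact hpq.le
  exact ⟨q, hq, hqp.trans hpε, by linarith [dist_triangle x p q]⟩

theorem kdist_le_of_mem_declutter (hsample : NoisySample P k K ε) (hk : 1 ≤ k)
    (hkP : k ≤ P.card) (hKne : K.Nonempty) {Q : List X}
    (hQ : IsDeclutterOutput (fun a b => dist a b) (kdist P k) P Q) {q : X} (hq : q ∈ Q) :
    kdist P k q ≤ 6 * ε := by
  by_cases hsmall : kdist P k q ≤ 2 * ε
  · linarith [hsample.nonneg hKne]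
  have hfar : 2 * kdist P k q - 5 * ε ≤ infDist q K := by
    refine (le_infDist hKne).mpr fun x hx => ?_
    obtain ⟨q', hq', hq'ε, hxq'⟩ := hsample.exists_mem_declutter_near hk hkP hQ hx
    have hsep := hQ.two_mul_le_of_lt hq hq' (by linarith)
    linarith [dist_triangle q x q']
  linarith [hsample.2 q]

end NoisySample

theorem resample_removes_outliers_general (P : Finset X) (k : ℕ) (hk : 1 ≤ k)
    (hkP : k ≤ P.card) (K : Set X) (hKne : K.Nonempty)
    (ε : ℝ) (hsample : NoisySample P k K ε)
    (Q : List X) (hQ : IsDeclutterOutput (fun a b => dist a b) (kdist P k) P Q) :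
    hausdorffDist
      {p | p ∈ P ∧ ∃ q ∈ Q, dist p q ≤ (10 + 2 * Real.sqrt 2) * kdist P k q} K
      ≤ 8 * (10 + 2 * Real.sqrt 2) * ε + 7 * ε := by
  have hε := hsample.nonneg hKne
  have hC : 0 ≤ 10 + 2 * Real.sqrt 2 := by positivity
  apply hausdorffDist_le_of_infDist (by positivity)
  · rintro p ⟨-, q, hq, hpq⟩
    have hqε := hsample.kdist_le_of_mem_declutter hk hkP hKne hQ hq
    calc infDist p K ≤ infDist q K + dist p q := infDist_le_infDist_add_dist
      _ ≤ kdist P k q + ε + (10 + 2 * Real.sqrt 2) * kdist P k q := add_le_add (hsample.2 q) hpq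
      _ ≤ 8 * (10 + 2 * Real.sqrt 2) * ε + 7 * ε := by nlinarith
  · intro x hx
    obtain ⟨q, hq, -, hxq⟩ := hsample.exists_mem_declutter_near hk hkP hQ hx
    have hq_resampled :
        q ∈ {p | p ∈ P ∧ ∃ q ∈ Q, dist p q ≤ (10 + 2 * Real.sqrt 2) * kdist P k q} :=
      ⟨hQ.mem_of_mem hq, q, hq, by simpa using mul_nonneg hC (kdist_nonneg P k q)⟩
    calc infDist x _ ≤ dist x q := infDist_le_dist_of_mem hq_resampled
      _ ≤ 8 * (10 + 2 * Real.sqrt 2) * ε + 7 * ε := by nlinarith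

/-- One declutter-resample step on a (ε_k,2)-uniform noisy sample removes all outliers:
the resampled set P' is within Hausdorff distance 8Cε + 7ε of K, where C = 10 + 2√2. -/
theorem resample_removes_outliers (P : Finset X) (k : ℕ) (hk : 1 ≤ k)
    (hkP : k ≤ P.card) (K : Set X) (hK : IsCompact K) (hKne : K.Nonempty)
    (ε : ℝ) (hsample : NoisySample P k K ε)
    (hunif : ∀ p ∈ P, ε / 2 ≤ kdist P k p)
    (Q : List X) (hQ : IsDeclutterOutput (fun a b => dist a b) (kdist P k) P Q) :
    hausdorffDist
      {p | p ∈ P ∧ ∃ q ∈ Q, dist p q ≤ (10 + 2 * Real.sqrt 2) * kdist P k q} K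
      ≤ 8 * (10 + 2 * Real.sqrt 2) * ε + 7 * ε :=
  resample_removes_outliers_general P k hk hkP K hKne ε hsample Q hQ
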